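/- arXiv:1704.02700 — 2 statements merged into one kernel-verified Lean document; each statement's English description precedes it below -/
import Mathlib

section
/- Define the relation P ≡ Q on implicational walks ending at the same vertex by: P ≡ Q iff P ∘ Q⁻¹ is not conflicting. Then ≡ is an equivalence relation on the set of implicational walks ending at each fixed vertex. -/
/-- A 0/1/all constraint between two domains: either a permutation
constraint (given by a bijection) or a two-fan constraint `(φ(u)=a) ∨ (φ(v)=b)`. -/
inductive ZOA (α β : Type) : Type where
  | perm (π : α ≃ β)
  | twofan (a : α) (b : β)

-- Unit propagation: fixing the first variable to `p`, the set of allowed values of the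
-- second variable is either everything (`none`, i.e. "all") or a singleton (`some q`).
open Classical in
noncomputable def ZOA.propg {α β : Type} : ZOA α β → α → Option β
  | .perm π, p => some (π p)
  | .twofan a b, p => if p = a then none else some b

/-- The reversed constraint on the opposite directed edge. -/
def ZOA.rev {α β : Type} : ZOA α β → ZOA β α
  | .perm π => .perm π.symm
  | .twofan a b => .twofan b a

/-- Satisfaction of a 0/1/all constraint by a pair of values. -/
def ZOA.Sat {α β : Type} : ZOA α β → α → β → Prop
  | .perm π, x, y => π x = y
  | .twofan a b, x, y => x = a ∨ y = b

/-- Walks in the primal graph given by an adjacency relation. -/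
inductive Wk {V : Type} (adj : V → V → Prop) : V → V → Type where
  | nil (v : V) : Wk adj v v
  | cons {u v w : V} (h : adj u v) (p : Wk adj v w) : Wk adj u w

/-- Concatenation of walks. -/
def Wk.app {V : Type} {adj : V → V → Prop} :
    ∀ {u v w : V}, Wk adj u v → Wk adj v w → Wk adj u w
  | _, _, _, .nil _, q => q
  | _, _, _, .cons h p, q => .cons h (Wk.app p q)

/-- Reversal of a walk (uses symmetry of the adjacency relation). -/
def Wk.rev {V : Type} {adj : V → V → Prop} (hs : ∀ u v : V, adj u v → adj v u) :
    ∀ {u v : V}, Wk adj u v → Wk adj v u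
  | _, _, .nil x => .nil x
  | _, _, .cons h p => Wk.app (Wk.rev hs p) (.cons (hs _ _ h) (.nil _))

/-- The list of vertices of a walk, in order (with multiplicity). -/
def Wk.support {V : Type} {adj : V → V → Prop} : ∀ {u w : V}, Wk adj u w → List V
  | _, _, .nil x => [x]
  | u, _, .cons _ p => u :: p.support

/-- Appending a single edge at the end of a walk. -/
def Wk.ext {V : Type} {adj : V → V → Prop} {s u t : V}
    (P : Wk adj s u) (h : adj u t) : Wk adj s t :=
  P.app (.cons h (.nil t))

/-- Unit propagation along a walk: `none` means "all" (no restriction), and "all" is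
absorbing. -/
noncomputable def runW {V : Type} {adj : V → V → Prop} {D : V → Type}
    (C : ∀ u v : V, adj u v → ZOA (D u) (D v)) :
    ∀ {u w : V}, Wk adj u w → D u → Option (D w)
  | _, _, .nil _, p => some p
  | _, _, .cons h q, p => ((C _ _ h).propg p).bind (runW C q)

/-- A walk is `φ_A`-implicational if it starts in `A` and unit propagation along it
from the assigned value yields a value (not "all"). -/
def Impl {V : Type} {adj : V → V → Prop} {D : V → Type}
    (C : ∀ u v : V, adj u v → ZOA (D u) (D v)) (A : Set V) (φ : ∀ v ∈ A, D v)
    {s t : V} (W : Wk adj s t) : Prop :=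
  ∃ hs : s ∈ A, (runW C W (φ s hs)).isSome

/-- A walk is `φ_A`-conflicting if it is implicational, ends in `A`, and its implied
value differs from the assigned value of its endpoint. -/
def Confl {V : Type} {adj : V → V → Prop} {D : V → Type}
    (C : ∀ u v : V, adj u v → ZOA (D u) (D v)) (A : Set V) (φ : ∀ v ∈ A, D v)
    {s t : V} (W : Wk adj s t) : Prop :=
  ∃ (hs : s ∈ A) (ht : t ∈ A) (q : D t),
    runW C W (φ s hs) = some q ∧ q ≠ φ t ht

/-- The type of implicational walks ending at a fixed vertex `t`. -/
def ImplWalk {V : Type} {adj : V → V → Prop} {D : V → Type}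
    (C : ∀ u v : V, adj u v → ZOA (D u) (D v)) (A : Set V) (φ : ∀ v ∈ A, D v)
    (t : V) : Type :=
  {P : Σ s : V, Wk adj s t // Impl C A φ P.2}


/-!
Propagating backwards along the reverse of a walk undoes forward propagation: if unit
propagation carries `x` to `y` along `Q`, then along `Q⁻¹` it carries `y` to "all" or back to
`x`, and it carries every `p ≠ y` to a value different from `x`. Hence `P ∘ Q⁻¹` is conflicting
exactly when the implied values of `P` and `Q` at the common endpoint differ, so `≡` is the
kernel of the map sending an implicational walk to its implied value.
-/

namespace ZOA

variable {α β : Type} (c : ZOA α β) {x : α} {y : β}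

lemma eq_of_propg_rev_eq_some (h : c.propg x = some y) {z : α} (hz : c.rev.propg y = some z) :
    z = x := by
  cases c with
  | perm π =>
    simp only [propg, rev, Option.some.injEq] at h hz
    rw [← hz, ← h, Equiv.symm_apply_apply]
  | twofan a b =>
    simp only [propg] at h
    split_ifs at h
    simp only [Option.some.injEq] at h
    simp [rev, propg, h] at hz

lemma exists_propg_rev_ne (h : c.propg x = some y) {p : β} (hp : p ≠ y) :
    ∃ z, c.rev.propg p = some z ∧ z ≠ x := by
  cases c with
  | perm π =>
    simp only [propg, Option.some.injEq] at h
    refine ⟨π.symm p, rfl, fun hz => hp ?_⟩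
    rw [← h, ← hz, Equiv.apply_symm_apply]
  | twofan a b =>
    simp only [propg] at h
    split_ifs at h with hx
    simp only [Option.some.injEq] at h
    exact ⟨a, by simp [rev, propg, h ▸ hp], fun hz => hx hz.symm⟩

end ZOA

section Propagation

variable {V : Type} {adj : V → V → Prop} {D : V → Type}
  (C : ∀ u v : V, adj u v → ZOA (D u) (D v))

lemma runW_single {u v : V} (h : adj u v) (x : D u) :
    runW C (.cons h (.nil v)) x = (C u v h).propg x := by
  simp only [runW]
  cases (C u v h).propg x <;> rfl

lemma runW_app {u v w : V} (P : Wk adj u v) (Q : Wk adj v w) (x : D u) :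
    runW C (P.app Q) x = (runW C P x).bind (runW C Q) := by
  induction P with
  | nil => rfl
  | cons h p ih => simp only [Wk.app, runW, ih, Option.bind_assoc]

variable {hsym : ∀ u v : V, adj u v → adj v u}
  (hcompat : ∀ u v (h : adj u v), C v u (hsym u v h) = (C u v h).rev)
include hcompat

lemma eq_of_runW_rev_eq_some {u w : V} (Q : Wk adj u w) {x : D u} {y : D w}
    (h : runW C Q x = some y) {z : D u} (hz : runW C (Q.rev hsym) y = some z) : z = x := by
  induction Q with
  | nil => simp_all [runW, Wk.rev]
  | cons hab q ih =>
    obtain ⟨y₁, hy₁, hq⟩ := Option.bind_eq_some_iff.mp h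
    rw [Wk.rev, runW_app] at hz
    obtain ⟨w₁, hw₁, hlast⟩ := Option.bind_eq_some_iff.mp hz
    rw [ih hq hw₁, runW_single, hcompat _ _ hab] at hlast
    exact (C _ _ hab).eq_of_propg_rev_eq_some hy₁ hlast

lemma exists_runW_rev_ne {u w : V} (Q : Wk adj u w) {x : D u} {y : D w}
    (h : runW C Q x = some y) {p : D w} (hp : p ≠ y) :
    ∃ z, runW C (Q.rev hsym) p = some z ∧ z ≠ x := by
  induction Q with
  | nil => exact ⟨p, rfl, Option.some_injective _ h ▸ hp⟩
  | cons hab q ih =>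
    obtain ⟨y₁, hy₁, hq⟩ := Option.bind_eq_some_iff.mp h
    obtain ⟨z₁, hz₁, hz₁ne⟩ := ih hq hp
    obtain ⟨z, hz, hzne⟩ := (C _ _ hab).exists_propg_rev_ne hy₁ hz₁ne
    refine ⟨z, ?_, hzne⟩
    rw [Wk.rev, runW_app, hz₁, Option.bind_some, runW_single, hcompat _ _ hab, hz]

lemma not_confl_app_rev_iff (A : Set V) (φ : ∀ v ∈ A, D v) {s s' t : V}
    (P : Wk adj s t) (Q : Wk adj s' t) {hs : s ∈ A} {hs' : s' ∈ A} {p q : D t}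
    (hp : runW C P (φ s hs) = some p) (hq : runW C Q (φ s' hs') = some q) :
    ¬ Confl C A φ (P.app (Q.rev hsym)) ↔ p = q := by
  constructor
  · intro hnc
    by_contra hpq
    obtain ⟨z, hz, hzne⟩ := exists_runW_rev_ne C hcompat Q hq hpq
    exact hnc ⟨hs, hs', z, by rw [runW_app, hp, Option.bind_some, hz], hzne⟩
  · rintro rfl ⟨_, _, z, hrun, hzne⟩
    rw [runW_app, hp, Option.bind_some] at hrun
    exact hzne (eq_of_runW_rev_eq_some C hcompat Q hq hrun)

end Propagation

/-- the relation `P ≡ Q` (defined by: `P ∘ Q⁻¹` is not conflicting) is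
an equivalence relation on the implicational walks ending at any fixed vertex. -/
theorem equiv_not_confl
    {V : Type} {adj : V → V → Prop} {D : V → Type}
    (hsym : ∀ u v : V, adj u v → adj v u)
    (C : ∀ u v : V, adj u v → ZOA (D u) (D v))
    (hcompat : ∀ u v (h : adj u v), C v u (hsym u v h) = (C u v h).rev)
    (A : Set V) (φ : ∀ v ∈ A, D v) (t : V) :
    Equivalence (fun P Q : ImplWalk C A φ t =>
      ¬ Confl C A φ (P.1.2.app (Q.1.2.rev hsym))) := by
  choose implied himplied using
    fun P : ImplWalk C A φ t => Option.isSome_iff_exists.mp P.2.choose_spec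
  have key (P Q : ImplWalk C A φ t) :
      ¬ Confl C A φ (P.1.2.app (Q.1.2.rev hsym)) ↔ implied P = implied Q :=
    not_confl_app_rev_iff C hcompat A φ P.1.2 Q.1.2 (himplied P) (himplied Q)
  simp only [key]
  exact (Setoid.ker implied).iseqv
end

section
/- Let y be a maximum basic F-packing and x a minimum half-integral F-cover with |x| = |y|. Then: (1) x(V(I)) = 1 for every integral path I of y, and (2) x(V(S)) = 1/2 for every spoke S of every wheel of y. -/
open scoped BigOperators

/-- A *wheel* for the family `F` of conflicting `A`-walks: a simple cycle
`H_1 ∘ … ∘ H_d` (`d` odd) together with pairwise vertex-disjoint spokes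
`S_1, …, S_d` from `A` to the cycle, each internally disjoint from the cycle, such
that `S_i ∘ H_i ∘ S_{i+1}⁻¹ ∈ F` for all `i` (indices cyclic). -/
structure Wheel {V : Type} [DecidableEq V] {adj : V → V → Prop}
    (hs : ∀ u v : V, adj u v → adj v u)
    (A : Set V) (F : ∀ u v : V, Wk adj u v → Prop) : Type where
  d : ℕ
  hodd : Odd d
  hpos : 0 < d
  hub : Fin d → V
  H : ∀ i : Fin d, Wk adj (hub i) (hub (finRotate d i))
  src : Fin d → V
  hsrc : ∀ i, src i ∈ A
  S : ∀ i : Fin d, Wk adj (src i) (hub i)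
  spoke_path : ∀ i, (S i).support.Nodup
  spokes_disjoint : ∀ i j, i ≠ j → ∀ x, x ∈ (S i).support → x ∉ (S j).support
  spoke_meets_cycle : ∀ i j, ∀ x, x ∈ (S i).support → x ∈ (H j).support → x = hub i
  cycle_simple : ∀ x : V, (∑ i : Fin d, (H i).support.dropLast.count x) ≤ 1
  cycle_len : 3 ≤ ∑ i : Fin d, (H i).support.dropLast.length
  mem : ∀ i : Fin d, F (src i) (src (finRotate d i))
    (((S i).app (H i)).app ((S (finRotate d i)).rev hs))

/-- The set of vertices of a wheel. -/
def Wheel.verts {V : Type} [DecidableEq V] {adj : V → V → Prop}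
    {hs : ∀ u v : V, adj u v → adj v u}
    {A : Set V} {F : ∀ u v : V, Wk adj u v → Prop}
    (w : Wheel hs A F) : Finset V :=
  Finset.univ.biUnion
    (fun i : Fin w.d => (w.H i).support.toFinset ∪ (w.S i).support.toFinset)

/-- The set of vertices of an integral path (given with its endpoints). -/
def pVerts {V : Type} [DecidableEq V] {adj : V → V → Prop}
    (p : Σ s t : V, Wk adj s t) : Finset V :=
  p.2.2.support.toFinset


/-!
For a wheel, the cover constraint of the walk `S_i ∘ H_i ∘ S_{i+1}⁻¹` reads
`x(S_i) + x(S_{i+1}) + x(H_i°) ≥ 1`, where `H_i°` is `H_i` without its two hubs. The interiors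
`H_i°` are disjoint from each other and from the spokes, so summing over `i` gives
`d ≤ 2 ∑ x(S_i) + x(V(W) ∖ spokes) ≤ 2 x(V(W))`; likewise `x(V(I)) ≥ 1` for an integral path.
The members of the packing are vertex-disjoint and `|x| = |y|`, so all these bounds are tight.
For a wheel this forces `x = 0` off the spokes, hence `x(S_i) + x(S_{i+1}) = 1` around a cycle
of odd length `d`, and so `x(S_i) = 1/2`.
-/

namespace Wk

variable {V : Type} {adj : V → V → Prop}

theorem support_ne_nil {u w : V} (p : Wk adj u w) : p.support ≠ [] := by
  cases p <;> simp [Wk.support]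

theorem support_app {u v w : V} (p : Wk adj u v) (q : Wk adj v w) :
    (p.app q).support = p.support.dropLast ++ q.support := by
  induction p with
  | nil x => simp [Wk.app, Wk.support]
  | cons h p ih =>
    rw [Wk.app, Wk.support, ih, Wk.support, List.dropLast_cons_of_ne_nil p.support_ne_nil,
      List.cons_append]

theorem dropLast_support_append {u w : V} (p : Wk adj u w) :
    p.support.dropLast ++ [w] = p.support := by
  induction p with
  | nil x => simp [Wk.support]
  | cons h p ih =>
    rw [Wk.support, List.dropLast_cons_of_ne_nil p.support_ne_nil, List.cons_append, ih]

theorem end_mem_support {u w : V} (p : Wk adj u w) : w ∈ p.support := by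
  rw [← p.dropLast_support_append]
  exact List.mem_append_right _ (List.mem_singleton_self w)

theorem support_eq_cons {u w : V} (p : Wk adj u w) : p.support = u :: p.support.tail := by
  cases p <;> rfl

theorem support_rev (hs : ∀ u v : V, adj u v → adj v u) {u w : V} (p : Wk adj u w) :
    (p.rev hs).support = p.support.reverse := by
  induction p with
  | nil x => simp [Wk.rev, Wk.support]
  | cons h p ih =>
    obtain ⟨l, hl⟩ : ∃ l, p.support = _ :: l := ⟨_, p.support_eq_cons⟩
    rw [Wk.rev, support_app, ih]
    simp [Wk.support, hl]

theorem start_mem_dropLast_support {u w : V} (p : Wk adj u w) (hp : p.support.dropLast ≠ []) :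
    u ∈ p.support.dropLast := by
  cases p with
  | nil x => exact absurd rfl hp
  | cons h q =>
    rw [Wk.support, List.dropLast_cons_of_ne_nil q.support_ne_nil]
    exact List.mem_cons_self

theorem dropLast_support_ne_nil {u w : V} (p : Wk adj u w) (huw : u ≠ w) :
    p.support.dropLast ≠ [] := by
  cases p with
  | nil x => exact absurd rfl huw
  | cons h q =>
    rw [Wk.support, List.dropLast_cons_of_ne_nil q.support_ne_nil]
    exact List.cons_ne_nil _ _

end Wk

open Fin.NatCast in
theorem two_nsmul_eq_of_add_finRotate_eq {G : Type*} [AddCommGroup G] {d : ℕ} (hd : Odd d)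
    (s : Fin d → G) (c : G) (h : ∀ i, s i + s (finRotate d i) = c) (i : Fin d) :
    2 • s i = c := by
  obtain ⟨m, rfl⟩ := hd
  have hsucc : ∀ j : Fin (2 * m + 1), s (j + 1) = c - s j := fun j => by
    rw [← h j, finRotate_apply, add_sub_cancel_left]
  have heven : ∀ k : ℕ, s (i + (2 * k : ℕ)) = s i := by
    intro k
    induction k with
    | zero => simp
    | succ k ih =>
      rw [show 2 * (k + 1) = 2 * k + 1 + 1 by ring, Nat.cast_succ, Nat.cast_succ, ← add_assoc,
        ← add_assoc, hsucc, hsucc, ih, sub_sub_cancel]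
  have hwrap : i + ((2 * m : ℕ) : Fin (2 * m + 1)) + 1 = i := by
    rw [add_assoc, ← Nat.cast_succ, Fin.natCast_self, add_zero]
  have hodd := hsucc (i + (2 * m : ℕ))
  rw [hwrap, heven m] at hodd
  rw [two_nsmul, ← sub_add_cancel c (s i), ← hodd]

open Function in
theorem Finset.sum_eq_of_pairwise_disjoint_of_sum_le {ι α M : Type*} [Fintype ι] [Fintype α]
    [DecidableEq α] [AddCommMonoid M] [PartialOrder M] [IsOrderedCancelAddMonoid M]
    (T : ι → Finset α) (hT : Pairwise (Disjoint on T)) (x : α → M) (hx : ∀ a, 0 ≤ x a)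
    (b : ι → M) (hb : ∀ j, b j ≤ ∑ a ∈ T j, x a) (hsum : ∑ a, x a ≤ ∑ j, b j)
    (j : ι) :
    ∑ a ∈ T j, x a = b j := by
  have hpack : ∑ j, ∑ a ∈ T j, x a ≤ ∑ j, b j := by
    rw [← Finset.sum_biUnion fun i _ j _ hij => hT hij]
    exact (Finset.sum_le_univ_sum_of_nonneg hx).trans hsum
  have heq := (Finset.sum_eq_sum_iff_of_le fun j _ => hb j).1
    (le_antisymm (Finset.sum_le_sum fun j _ => hb j) hpack)
  exact (heq j (Finset.mem_univ j)).symm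

namespace Wheel

variable {V : Type} [DecidableEq V] {adj : V → V → Prop} {hs : ∀ u v : V, adj u v → adj v u}
  {A : Set V} {F : ∀ u v : V, Wk adj u v → Prop} (W : Wheel hs A F)

def spokeVerts : Finset V :=
  Finset.univ.biUnion fun i => (W.S i).support.toFinset

def cycle : List V :=
  (List.ofFn fun i => (W.H i).support.dropLast).flatten

theorem hub_injective : Function.Injective W.hub := fun i j hij => by
  by_contra hne
  exact W.spokes_disjoint i j hne _ (W.S i).end_mem_support
    (by rw [hij]; exact (W.S j).end_mem_support)

theorem hub_mem_spokeVerts (i : Fin W.d) : W.hub i ∈ W.spokeVerts :=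
  Finset.mem_biUnion.2 ⟨i, Finset.mem_univ i, List.mem_toFinset.2 (W.S i).end_mem_support⟩

theorem spokeVerts_subset_verts : W.spokeVerts ⊆ W.verts := fun v hv => by
  obtain ⟨i, -, hi⟩ := Finset.mem_biUnion.1 hv
  exact Finset.mem_biUnion.2 ⟨i, Finset.mem_univ i, Finset.mem_union_right _ hi⟩

theorem cycle_nodup : W.cycle.Nodup := by
  rw [List.nodup_iff_count_le_one]
  intro v
  simpa [cycle, List.count_flatten, List.map_ofFn, List.sum_ofFn] using W.cycle_simple v

theorem mem_cycle {v : V} : v ∈ W.cycle ↔ ∃ i, v ∈ (W.H i).support.dropLast := by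
  simp [cycle, List.mem_flatten, List.mem_ofFn]

theorem hub_mem_dropLast_support (i : Fin W.d) : W.hub i ∈ (W.H i).support.dropLast := by
  refine (W.H i).start_mem_dropLast_support ?_
  rcases Nat.lt_or_ge W.d 2 with hd | hd
  · intro hnil
    have hlen := W.cycle_len
    rw [Finset.sum_eq_single_of_mem i (Finset.mem_univ i)
      fun j _ hj => absurd (Fin.ext (by omega)) hj, hnil] at hlen
    simp at hlen
  · refine (W.H i).dropLast_support_ne_nil fun hfix => ?_
    have hmoved : i ∈ (finRotate W.d).support := by
      rw [support_finRotate_of_le hd]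
      exact Finset.mem_univ _
    exact Equiv.Perm.mem_support.1 hmoved (W.hub_injective hfix).symm

theorem mem_image_hub_union_sdiff_of_mem_cycle {v : V} (hv : v ∈ W.cycle) :
    v ∈ Finset.univ.image W.hub ∪ (W.verts \ W.spokeVerts) := by
  obtain ⟨i, hi⟩ := W.mem_cycle.1 hv
  have hvH : v ∈ (W.H i).support := List.dropLast_subset _ hi
  by_cases hsp : v ∈ W.spokeVerts
  · obtain ⟨j, -, hj⟩ := Finset.mem_biUnion.1 hsp
    exact Finset.mem_union_left _ (Finset.mem_image.2
      ⟨j, Finset.mem_univ j, (W.spoke_meets_cycle j i v (List.mem_toFinset.1 hj) hvH).symm⟩)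
  · refine Finset.mem_union_right _ (Finset.mem_sdiff.2 ⟨?_, hsp⟩)
    exact Finset.mem_biUnion.2
      ⟨i, Finset.mem_univ i, Finset.mem_union_left _ (List.mem_toFinset.2 hvH)⟩

theorem sum_spokeVerts (x : V → ℚ) :
    ∑ v ∈ W.spokeVerts, x v = ∑ i, ∑ v ∈ (W.S i).support.toFinset, x v :=
  Finset.sum_biUnion fun i _ j _ hij => Finset.disjoint_left.2 fun v hvi hvj =>
    W.spokes_disjoint i j hij v (List.mem_toFinset.1 hvi) (List.mem_toFinset.1 hvj)

theorem sum_dropLast_support_le {x : V → ℚ} (hx : ∀ v, 0 ≤ x v) :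
    ∑ i, ((W.H i).support.dropLast.map x).sum
      ≤ ∑ i, x (W.hub i) + ∑ v ∈ W.verts \ W.spokeVerts, x v := by
  have hdisj : Disjoint (Finset.univ.image W.hub) (W.verts \ W.spokeVerts) :=
    Finset.disjoint_left.2 fun v hv hv' => by
      obtain ⟨i, -, rfl⟩ := Finset.mem_image.1 hv
      exact (Finset.mem_sdiff.1 hv').2 (W.hub_mem_spokeVerts i)
  calc ∑ i, ((W.H i).support.dropLast.map x).sum = (W.cycle.map x).sum := by
        simp [cycle, List.map_flatten, List.sum_flatten, List.map_ofFn, List.sum_ofFn]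
    _ = ∑ v ∈ W.cycle.toFinset, x v := (List.sum_toFinset x W.cycle_nodup).symm
    _ ≤ ∑ v ∈ Finset.univ.image W.hub ∪ (W.verts \ W.spokeVerts), x v :=
        Finset.sum_le_sum_of_subset_of_nonneg
          (fun v hv => W.mem_image_hub_union_sdiff_of_mem_cycle (List.mem_toFinset.1 hv))
          fun v _ _ => hx v
    _ = ∑ i, x (W.hub i) + ∑ v ∈ W.verts \ W.spokeVerts, x v := by
        rw [Finset.sum_union hdisj, Finset.sum_image fun i _ j _ h => W.hub_injective h]

theorem one_le_spoke_add_interior_add_spoke {x : V → ℚ}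
    (hcover : ∀ (s t : V) (P : Wk adj s t), F s t P → 1 ≤ (P.support.map x).sum)
    (i : Fin W.d) :
    1 ≤ ∑ v ∈ (W.S i).support.toFinset, x v
      + (((W.H i).support.dropLast.map x).sum - x (W.hub i))
      + ∑ v ∈ (W.S (finRotate W.d i)).support.toFinset, x v := by
  have hwalk := hcover _ _ _ (W.mem i)
  rw [Wk.support_app, Wk.support_app, Wk.support_rev,
    List.dropLast_append_of_ne_nil (W.H i).support_ne_nil] at hwalk
  have hspoke := congrArg (fun l => (l.map x).sum) (W.S i).dropLast_support_append
  simp only [List.map_append, List.sum_append, List.map_reverse, List.sum_reverse, List.map_cons,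
    List.map_nil, List.sum_cons, List.sum_nil, add_zero] at hwalk hspoke
  rw [List.sum_toFinset x (W.spoke_path i), List.sum_toFinset x (W.spoke_path _)]
  linarith

theorem sum_verts_eq (x : V → ℚ) :
    ∑ v ∈ W.verts, x v
      = ∑ v ∈ W.verts \ W.spokeVerts, x v + ∑ i, ∑ v ∈ (W.S i).support.toFinset, x v := by
  rw [← sum_spokeVerts, Finset.sum_sdiff W.spokeVerts_subset_verts]

theorem d_le_two_mul_sum_spokes_add_sum_interiors {x : V → ℚ}
    (hcover : ∀ (s t : V) (P : Wk adj s t), F s t P → 1 ≤ (P.support.map x).sum) :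
    (W.d : ℚ) ≤ 2 * ∑ i, ∑ v ∈ (W.S i).support.toFinset, x v
      + ∑ i, (((W.H i).support.dropLast.map x).sum - x (W.hub i)) := by
  have hsum := Finset.sum_le_sum fun i (_ : i ∈ Finset.univ) =>
    W.one_le_spoke_add_interior_add_spoke hcover i
  rw [Finset.sum_add_distrib, Finset.sum_add_distrib,
    Equiv.sum_comp (finRotate W.d) fun i => ∑ v ∈ (W.S i).support.toFinset, x v] at hsum
  simp only [Finset.sum_const, Finset.card_univ, Fintype.card_fin, nsmul_eq_mul, mul_one] at hsum
  linarith

theorem half_d_le_sum_verts {x : V → ℚ} (hx : ∀ v, 0 ≤ x v)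
    (hcover : ∀ (s t : V) (P : Wk adj s t), F s t P → 1 ≤ (P.support.map x).sum) :
    (W.d : ℚ) / 2 ≤ ∑ v ∈ W.verts, x v := by
  have hcycle := W.sum_dropLast_support_le hx
  have hoff : 0 ≤ ∑ v ∈ W.verts \ W.spokeVerts, x v := Finset.sum_nonneg fun v _ => hx v
  have hwalks := W.d_le_two_mul_sum_spokes_add_sum_interiors hcover
  rw [Finset.sum_sub_distrib] at hwalks
  linarith [W.sum_verts_eq x]

theorem sum_spoke_eq_half {x : V → ℚ} (hx : ∀ v, 0 ≤ x v)
    (hcover : ∀ (s t : V) (P : Wk adj s t), F s t P → 1 ≤ (P.support.map x).sum)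
    (htight : ∑ v ∈ W.verts, x v ≤ W.d / 2) (i : Fin W.d) :
    ∑ v ∈ (W.S i).support.toFinset, x v = 1 / 2 := by
  set s : Fin W.d → ℚ := fun i => ∑ v ∈ (W.S i).support.toFinset, x v
  set e : Fin W.d → ℚ := fun i => ((W.H i).support.dropLast.map x).sum - x (W.hub i) with he_def
  have he_nonneg : ∀ i, 0 ≤ e i := fun i => sub_nonneg.2 <|
    List.single_le_sum (fun _ hv => by obtain ⟨v, -, rfl⟩ := List.mem_map.1 hv; exact hx v) _
      (List.mem_map_of_mem (W.hub_mem_dropLast_support i))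
  have hwalks : (W.d : ℚ) ≤ 2 * ∑ i, s i + ∑ i, e i :=
    W.d_le_two_mul_sum_spokes_add_sum_interiors hcover
  have hcycle : ∑ i, e i ≤ ∑ v ∈ W.verts \ W.spokeVerts, x v := by
    rw [he_def, Finset.sum_sub_distrib]
    linarith [W.sum_dropLast_support_le hx]
  have hoff : 0 ≤ ∑ v ∈ W.verts \ W.spokeVerts, x v := Finset.sum_nonneg fun v _ => hx v
  have hverts := W.sum_verts_eq x
  have he_zero : ∀ i, e i = 0 := fun i =>
    (Finset.sum_eq_zero_iff_of_nonneg fun i _ => he_nonneg i).1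
      (le_antisymm (by linarith) (Finset.sum_nonneg fun i _ => he_nonneg i)) i (Finset.mem_univ i)
  have hpair : ∀ i, 1 ≤ s i + s (finRotate W.d i) := fun i => by
    linarith [W.one_le_spoke_add_interior_add_spoke hcover i, he_zero i]
  have hpair_sum : ∑ i, (s i + s (finRotate W.d i)) ≤ ∑ _i : Fin W.d, (1 : ℚ) := by
    rw [Finset.sum_add_distrib, Equiv.sum_comp (finRotate W.d) s]
    simp only [Finset.sum_const, Finset.card_univ, Fintype.card_fin, nsmul_eq_mul, mul_one]
    linarith
  have hpair_eq : ∀ i, s i + s (finRotate W.d i) = 1 := fun i =>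
    ((Finset.sum_eq_sum_iff_of_le fun i _ => hpair i).1
      (le_antisymm (Finset.sum_le_sum fun i _ => hpair i) hpair_sum) i (Finset.mem_univ i)).symm
  have htwo := two_nsmul_eq_of_add_finRotate_eq W.hodd s 1 hpair_eq i
  rw [two_nsmul] at htwo
  linarith

end Wheel

/-- Lemma on the structure of minimum covers: let `y` be a maximum
basic `F`-packing, given by vertex-disjoint integral paths (indexed by `ιP`) and
wheels (indexed by `ιW`), and let `x` be a minimum half-integral `F`-cover with
`|x| = |y|`. Then `x(V(I)) = 1` for every integral path `I` of `y`, and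
`x(V(S)) = 1/2` for every spoke `S` of every wheel of `y`. -/
theorem cover_on_packing
    {V : Type} [Fintype V] [DecidableEq V] {adj : V → V → Prop}
    (hs : ∀ u v : V, adj u v → adj v u)
    (A : Set V) (F : ∀ u v : V, Wk adj u v → Prop)
    {ιP ιW : Type} [Fintype ιP] [Fintype ιW]
    (pth : ιP → Σ s t : V, Wk adj s t)
    (hpthF : ∀ p, F (pth p).1 (pth p).2.1 (pth p).2.2)
    (hpthSimple : ∀ p, (pth p).2.2.support.Nodup)
    (whl : ιW → Wheel hs A F)
    (hPP : ∀ p p', p ≠ p' → Disjoint (pVerts (pth p)) (pVerts (pth p')))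
    (hWW : ∀ w w', w ≠ w' → Disjoint (whl w).verts (whl w').verts)
    (hPW : ∀ p w, Disjoint (pVerts (pth p)) (whl w).verts)
    (x : V → ℚ)
    (hxval : ∀ v, x v = 0 ∨ x v = 1/2 ∨ x v = 1)
    (hcover : ∀ (s t : V) (W : Wk adj s t), F s t W → 1 ≤ (W.support.map x).sum)
    (hsize : ∑ v : V, x v = (Fintype.card ιP : ℚ) + ∑ w : ιW, ((whl w).d : ℚ) / 2) :
    (∀ p : ιP, (∑ v ∈ pVerts (pth p), x v) = 1) ∧
    (∀ (w : ιW) (i : Fin (whl w).d),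
      (∑ v ∈ ((whl w).S i).support.toFinset, x v) = 1/2) := by
  have hx : ∀ v, 0 ≤ x v := fun v => by rcases hxval v with h | h | h <;> rw [h] <;> norm_num
  let T : ιP ⊕ ιW → Finset V := Sum.elim (fun p => pVerts (pth p)) fun w => (whl w).verts
  let b : ιP ⊕ ιW → ℚ := Sum.elim (fun _ => 1) fun w => ((whl w).d : ℚ) / 2
  have hT : Pairwise (Function.onFun Disjoint T) := by
    rintro (p | w) (p' | w') hne
    · exact hPP p p' fun h => hne (congrArg _ h)
    · exact hPW p w'
    · exact (hPW p' w).symm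
    · exact hWW w w' fun h => hne (congrArg _ h)
  have hb : ∀ j, b j ≤ ∑ v ∈ T j, x v := by
    rintro (p | w)
    · simpa [b, T, pVerts, List.sum_toFinset x (hpthSimple p)] using hcover _ _ _ (hpthF p)
    · exact (whl w).half_d_le_sum_verts hx hcover
  have hsum : ∑ v, x v ≤ ∑ j, b j := by simp [b, Fintype.sum_sum_type, hsize]
  have htight := Finset.sum_eq_of_pairwise_disjoint_of_sum_le T hT x hx b hb hsum
  exact ⟨fun p => htight (.inl p),
    fun w => (whl w).sum_spoke_eq_half hx hcover (htight (.inr w)).le⟩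
end
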